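/- arXiv:2111.07196 — 6 statements merged into one kernel-verified Lean document; each statement's English description precedes it below -/
import Mathlib

section
/- For φ ∈ (0, π), the function ψ_s(φ) = π/2 + (1/2)·arctan(√3(3-cos φ)/(-1-cos φ)) is strictly decreasing, with values in the interval (π/4, π/3). -/
open Real Set

noncomputable def ψs (φ : ℝ) : ℝ :=
  π / 2 + Real.arctan (Real.sqrt 3 * (3 - Real.cos φ) / (-1 - Real.cos φ)) / 2

/- `ψs` is the strictly increasing map `t ↦ π/2 + arctan t / 2` applied to
`g (cos φ)`, where `g c = √3 (3 - c)/(-1 - c) = √3 (1 - 4/(1 + c))` increases on `c > -1`.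
Since `cos` decreases from `1` to `-1` on `(0, π)`, `ψs` decreases, and `g (cos φ)` ranges in
`(-∞, g 1) = (-∞, -√3)`, so `arctan` lands in `(-π/2, -π/3)` and `ψs` in `(π/4, π/3)`. -/

lemma strictMonoOn_mul_three_sub_div_neg_one_sub {k : ℝ} (hk : 0 < k) :
    StrictMonoOn (fun c : ℝ => k * (3 - c) / (-1 - c)) (Ioi (-1)) := by
  intro a ha b hb hab
  have ha' : 0 < 1 + a := by linarith [mem_Ioi.mp ha]
  have hb' : 0 < 1 + b := by linarith [mem_Ioi.mp hb]
  simp only [show ∀ c : ℝ, -1 - c = -(1 + c) by intro c; ring, div_neg, neg_lt_neg_iff]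
  rw [div_lt_div_iff₀ hb' ha']
  nlinarith

lemma strictMono_pi_div_two_add_arctan_div_two :
    StrictMono fun t : ℝ => π / 2 + arctan t / 2 := fun _ _ h => by
  have := arctan_strictMono h
  dsimp only
  linarith

theorem psi_s_strictAnti_and_range :
    StrictAntiOn ψs (Ioo 0 π) ∧
      ∀ φ ∈ Ioo (0 : ℝ) π, ψs φ ∈ Ioo (π / 4) (π / 3) := by
  have hg := strictMonoOn_mul_three_sub_div_neg_one_sub (k := √3) (by positivity)
  have hcos : MapsTo cos (Ioo 0 π) (Ioi (-1)) := fun φ hφ => (mapsTo_cos_Ioo hφ).1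
  refine ⟨strictMono_pi_div_two_add_arctan_div_two.comp_strictAntiOn
    (hg.comp_strictAntiOn (strictAntiOn_cos.mono Ioo_subset_Icc_self) hcos), fun φ hφ => ?_⟩
  have hlt_one : cos φ < 1 := (mapsTo_cos_Ioo hφ).2
  have hg_lt : √3 * (3 - cos φ) / (-1 - cos φ) < -√3 := by
    have := hg (hcos hφ) (show (1 : ℝ) ∈ Ioi (-1) by norm_num) hlt_one
    dsimp only at this
    rwa [show √3 * (3 - 1) / (-1 - 1) = -√3 by ring] at this
  have hupper : arctan (√3 * (3 - cos φ) / (-1 - cos φ)) < -(π / 3) := by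
    simpa only [arctan_neg, arctan_sqrt_three] using arctan_strictMono hg_lt
  have hlower := neg_pi_div_two_lt_arctan (√3 * (3 - cos φ) / (-1 - cos φ))
  constructor <;> unfold ψs <;> linarith
end

section
/- There exists a holomorphic (regular) function β on a neighborhood of (−π, π] with β(0) = 0 satisfying cos(β(φ)) = 1 + (cos φ − 1)e^{2πi/3} for all φ ∈ (−π, π]. -/
/-!
Put `w = e^{iπ/3} sin(φ/2)`. Since `cos φ - 1 = -2 sin²(φ/2)` and `e^{2πi/3} = (e^{iπ/3})²`, the
right-hand side is `1 - 2w² = cos (2 arcsin w)`, where `arcsin w = -i log (i w + √(1 - w²))`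
satisfies `sin (arcsin w) = w` for every `w`. This branch is holomorphic wherever `1 - w²` lies off
`(-∞, 0]`: there `√(1 - w²)` has positive real part, hence so does `i w + √(1 - w²)`, because its
sum with its reciprocal is `2 √(1 - w²)`. For real `φ` the real part of `1 - w²` is
`1 + sin²(φ/2)/2 > 0`, so `β = 2 arcsin w` does the job.
-/

open Real Set

namespace Complex

noncomputable def arcsin (w : ℂ) : ℂ := -I * log (I * w + sqrt (1 - w ^ 2))

@[simp]
lemma arcsin_zero : arcsin 0 = 0 := by
  simp [arcsin]

lemma sqrt_sq (z : ℂ) : sqrt z ^ 2 = z := cpow_ofNat_inv_pow z 2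

lemma re_sqrt_pos {z : ℂ} (hz : z ∈ slitPlane) : 0 < (sqrt z).re := by
  rw [sqrt, cpow_inv_two_re, Real.sqrt_pos]
  rcases mem_slitPlane_iff.1 hz with h | h
  · linarith [norm_nonneg z]
  · linarith [abs_re_lt_norm.2 h, neg_abs_le z.re]

lemma mul_sqrt_sub_eq_one (w : ℂ) :
    (I * w + sqrt (1 - w ^ 2)) * (sqrt (1 - w ^ 2) - I * w) = 1 := by
  linear_combination sqrt_sq (1 - w ^ 2) - w ^ 2 * I_sq

lemma exp_arcsin_mul_I (w : ℂ) : exp (arcsin w * I) = I * w + sqrt (1 - w ^ 2) := by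
  have hne : I * w + sqrt (1 - w ^ 2) ≠ 0 := left_ne_zero_of_mul_eq_one (mul_sqrt_sub_eq_one w)
  rw [arcsin, show -I * log (I * w + sqrt (1 - w ^ 2)) * I = log (I * w + sqrt (1 - w ^ 2)) by
    linear_combination -log (I * w + sqrt (1 - w ^ 2)) * I_mul_I, exp_log hne]

lemma sin_arcsin (w : ℂ) : sin (arcsin w) = w := by
  have hinv : sqrt (1 - w ^ 2) - I * w = (I * w + sqrt (1 - w ^ 2))⁻¹ :=
    eq_inv_of_mul_eq_one_right (mul_sqrt_sub_eq_one w)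
  rw [sin, neg_mul, exp_neg, exp_arcsin_mul_I, ← hinv]
  linear_combination -w * I_sq

lemma cos_two_mul_arcsin (w : ℂ) : cos (2 * arcsin w) = 1 - 2 * w ^ 2 := by
  rw [cos_two_mul, cos_sq', sin_arcsin]
  ring

lemma re_add_sqrt_pos {w : ℂ} (hw : 1 - w ^ 2 ∈ slitPlane) :
    0 < (I * w + sqrt (1 - w ^ 2)).re := by
  set g := I * w + sqrt (1 - w ^ 2)
  have hsum : g + g⁻¹ = sqrt (1 - w ^ 2) + sqrt (1 - w ^ 2) := by
    rw [← eq_inv_of_mul_eq_one_right (mul_sqrt_sub_eq_one w)]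
    ring
  have hre := congrArg re hsum
  simp only [add_re] at hre
  by_contra! hg
  have hginv : (g⁻¹).re ≤ 0 := by
    rw [inv_re]
    exact div_nonpos_of_nonpos_of_nonneg hg (normSq_nonneg g)
  linarith [re_sqrt_pos hw]

lemma differentiableAt_arcsin {w : ℂ} (hw : 1 - w ^ 2 ∈ slitPlane) :
    DifferentiableAt ℂ arcsin w := by
  have hlog : I * w + sqrt (1 - w ^ 2) ∈ slitPlane := Or.inl (re_add_sqrt_pos hw)
  unfold arcsin
  fun_prop (disch := assumption)

lemma cos_two_mul_arcsin_mul_sin_half (c z : ℂ) :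
    cos (2 * arcsin (c * sin (z / 2))) = 1 + (cos z - 1) * c ^ 2 := by
  rw [cos_two_mul_arcsin, show z = 2 * (z / 2) by ring, cos_two_mul, cos_sq',
    mul_div_cancel_left₀ _ two_ne_zero]
  ring

lemma one_sub_sq_mem_slitPlane {c : ℂ} (hc : (c ^ 2).re ≤ 0) (t : ℝ) :
    1 - (c * t) ^ 2 ∈ slitPlane := by
  refine Or.inl ?_
  rw [mul_pow, ← ofReal_pow, sub_re, one_re, re_mul_ofReal]
  nlinarith [sq_nonneg t]

lemma exp_pi_div_three_mul_I_sq : exp (π * I / 3) ^ 2 = exp (2 * π * I / 3) := by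
  rw [← exp_nat_mul]
  ring_nf

lemma re_exp_two_pi_div_three_mul_I_nonpos : (exp (2 * π * I / 3)).re ≤ 0 := by
  rw [show 2 * π * I / 3 = ((2 * π / 3 : ℝ) : ℂ) * I by push_cast; ring, exp_ofReal_mul_I_re]
  apply Real.cos_nonpos_of_pi_div_two_le_of_le <;> linarith [pi_pos]

end Complex

theorem exists_regular_branch_arccos :
    ∃ (U : Set ℂ) (β : ℂ → ℂ),
      IsOpen U ∧
      (∀ φ ∈ Ioc (-π) π, (φ : ℂ) ∈ U) ∧
      DifferentiableOn ℂ β U ∧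
      β 0 = 0 ∧
      ∀ φ ∈ Ioc (-π) π,
        Complex.cos (β (φ : ℂ)) =
          1 + ((Real.cos φ : ℂ) - 1) * Complex.exp (2 * Real.pi * Complex.I / 3) := by
  set c := Complex.exp (π * Complex.I / 3)
  have hc : (c ^ 2).re ≤ 0 :=
    Complex.exp_pi_div_three_mul_I_sq ▸ Complex.re_exp_two_pi_div_three_mul_I_nonpos
  have hsin (φ : ℝ) : Complex.sin ((φ : ℂ) / 2) = (Real.sin (φ / 2) : ℝ) := by
    rw [Complex.ofReal_sin, Complex.ofReal_div, Complex.ofReal_ofNat]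
  refine ⟨{z | 1 - (c * Complex.sin (z / 2)) ^ 2 ∈ Complex.slitPlane},
    fun z ↦ 2 * Complex.arcsin (c * Complex.sin (z / 2)),
    Complex.isOpen_slitPlane.preimage (by fun_prop), fun φ _ ↦ ?_, fun z hz ↦ ?_,
    by simp, ?_⟩
  · simpa only [mem_ofPred_eq, hsin] using Complex.one_sub_sq_mem_slitPlane hc _
  · have hw : DifferentiableAt ℂ (fun z ↦ c * Complex.sin (z / 2)) z := by fun_prop
    exact ((Complex.differentiableAt_arcsin hz).comp z hw).const_mul 2 |>.differentiableWithinAt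
  · intro φ _
    rw [Complex.cos_two_mul_arcsin_mul_sin_half, Complex.ofReal_cos,
      Complex.exp_pi_div_three_mul_I_sq]
end

section
/- Let β(φ) be the regular branch of arccos(1 + (cos φ − 1)e^{2πi/3}) with β(0)=0. Then for φ ∈ (0,π), β″(φ) = √3 (1 − cos φ)² e^{iπ/6} / sin³(β(φ)). -/
/-!
Differentiating `β' = sin φ / sin β · ω` (with `ω = e^{2πi/3}`) once more gives
`β'' = (cos φ sin² β - sin² φ · ω cos β) ω / sin³ β`. Substituting `sin² φ = 1 - cos² φ`,
`cos β = 1 + (cos φ - 1) ω` and `sin² β = 1 - cos² β`, the numerator collapses to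
`(1 - cos φ)² (ω³ - ω²)` for every `ω`, and `ω³ - ω² = 1 - ω̄ = √3 e^{iπ/6}`.
-/

open Real Set

theorem hasDerivAt_ofReal_sin_div_csin_comp_mul {β : ℝ → ℂ} {β' : ℂ} {φ : ℝ}
    (hβ : HasDerivAt β β' φ) (hS : Complex.sin (β φ) ≠ 0) (ω : ℂ) :
    HasDerivAt (fun x => (Real.sin x : ℂ) / Complex.sin (β x) * ω)
      (((Real.cos φ : ℂ) * Complex.sin (β φ) - (Real.sin φ : ℂ) * (Complex.cos (β φ) * β')) /
        Complex.sin (β φ) ^ 2 * ω) φ :=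
  ((Real.hasDerivAt_sin φ).ofReal_comp.div ((Complex.hasDerivAt_sin (β φ)).comp φ hβ) hS).mul_const
    ω

theorem sin_div_sin_quotient_rule_eq {c s S ω : ℂ} (hS : S ≠ 0) (hs : s ^ 2 = 1 - c ^ 2)
    (hSC : S ^ 2 = 1 - (1 + (c - 1) * ω) ^ 2) :
    (c * S - s * ((1 + (c - 1) * ω) * (s / S * ω))) / S ^ 2 * ω =
      (1 - c) ^ 2 * (ω ^ 3 - ω ^ 2) / S ^ 3 := by
  calc _ = (c * S ^ 2 - s ^ 2 * ω * (1 + (c - 1) * ω)) * ω / S ^ 3 := by field_simp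
    _ = _ := by rw [hs, hSC]; ring

theorem exp_two_pi_I_div_three_pow_three_sub_sq :
    Complex.exp (2 * π * Complex.I / 3) ^ 3 - Complex.exp (2 * π * Complex.I / 3) ^ 2 =
      (√3 : ℂ) * Complex.exp (π * Complex.I / 6) := by
  rw [← Complex.exp_nat_mul, ← Complex.exp_nat_mul]
  have h3 : ((3 : ℕ) : ℂ) * (2 * π * Complex.I / 3) = ((2 * π : ℝ) : ℂ) * Complex.I := by
    push_cast; ring
  have h2 : ((2 : ℕ) : ℂ) * (2 * π * Complex.I / 3) = ((π / 3 + π : ℝ) : ℂ) * Complex.I := by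
    push_cast; ring
  have h6 : (π : ℂ) * Complex.I / 6 = ((π / 6 : ℝ) : ℂ) * Complex.I := by push_cast; ring
  have hr : (√3 : ℂ) ^ 2 = 3 := by norm_cast; simp
  simp only [h2, h3, h6, Complex.exp_mul_I, ← Complex.ofReal_cos, ← Complex.ofReal_sin,
    Real.cos_two_pi, Real.sin_two_pi, Real.cos_add_pi, Real.sin_add_pi, Real.cos_pi_div_three,
    Real.sin_pi_div_three, Real.cos_pi_div_six, Real.sin_pi_div_six]
  push_cast
  linear_combination (-1 / 2 : ℂ) * hr

theorem deriv2_branch_arccos_general (β : ℝ → ℂ)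
    (hcos : ∀ φ : ℝ, Complex.cos (β φ) =
      1 + ((Real.cos φ : ℂ) - 1) * Complex.exp (2 * Real.pi * Complex.I / 3))
    (hdiff : ∀ φ ∈ Ioo (0 : ℝ) π, DifferentiableAt ℝ β φ)
    (hsin : ∀ φ ∈ Ioo (0 : ℝ) π, Complex.sin (β φ) ≠ 0)
    (hderiv : ∀ φ ∈ Ioo (0 : ℝ) π,
      deriv β φ = (Real.sin φ : ℂ) / Complex.sin (β φ) *
        Complex.exp (2 * Real.pi * Complex.I / 3)) :
    ∀ φ ∈ Ioo (0 : ℝ) π,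
      deriv (deriv β) φ =
        (Real.sqrt 3 : ℂ) * ((1 : ℂ) - (Real.cos φ : ℂ)) ^ 2 *
          Complex.exp (Real.pi * Complex.I / 6) / Complex.sin (β φ) ^ 3 := by
  intro φ hφ
  have hderiv_near : deriv β =ᶠ[nhds φ] fun x => (Real.sin x : ℂ) / Complex.sin (β x) *
      Complex.exp (2 * π * Complex.I / 3) :=
    Filter.eventually_of_mem (isOpen_Ioo.mem_nhds hφ) hderiv
  have hsin_sq : Complex.sin (β φ) ^ 2 =
      1 - (1 + ((Real.cos φ : ℂ) - 1) * Complex.exp (2 * π * Complex.I / 3)) ^ 2 := by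
    rw [← hcos φ, ← Complex.sin_sq_add_cos_sq (β φ)]; ring
  have hsin_sq_real : (Real.sin φ : ℂ) ^ 2 = 1 - (Real.cos φ : ℂ) ^ 2 := by
    rw [Complex.ofReal_cos, Complex.ofReal_sin, Complex.sin_sq]
  rw [hderiv_near.deriv_eq,
    (hasDerivAt_ofReal_sin_div_csin_comp_mul (hdiff φ hφ).hasDerivAt (hsin φ hφ) _).deriv,
    hderiv φ hφ, hcos φ, sin_div_sin_quotient_rule_eq (hsin φ hφ) hsin_sq_real hsin_sq,
    exp_two_pi_I_div_three_pow_three_sub_sq]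
  ring

theorem deriv2_branch_arccos (β : ℝ → ℂ)
    (hβ0 : β 0 = 0)
    (hcos : ∀ φ : ℝ, Complex.cos (β φ) =
      1 + ((Real.cos φ : ℂ) - 1) * Complex.exp (2 * Real.pi * Complex.I / 3))
    (hdiff : ∀ φ ∈ Ioo (0 : ℝ) π, DifferentiableAt ℝ β φ)
    (hdiff2 : ∀ φ ∈ Ioo (0 : ℝ) π, DifferentiableAt ℝ (deriv β) φ)
    (hsin : ∀ φ ∈ Ioo (0 : ℝ) π, Complex.sin (β φ) ≠ 0)
    (hderiv : ∀ φ ∈ Ioo (0 : ℝ) π,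
      deriv β φ = (Real.sin φ : ℂ) / Complex.sin (β φ) *
        Complex.exp (2 * Real.pi * Complex.I / 3)) :
    ∀ φ ∈ Ioo (0 : ℝ) π,
      deriv (deriv β) φ =
        (Real.sqrt 3 : ℂ) * ((1 : ℂ) - (Real.cos φ : ℂ)) ^ 2 *
          Complex.exp (Real.pi * Complex.I / 6) / Complex.sin (β φ) ^ 3 :=
  deriv2_branch_arccos_general β hcos hdiff hsin hderiv
end

section
/- Let c(φ) = Re β(φ) and b(φ) = Im β(φ), where β is the regular branch of arccos(1+(cos φ−1)e^{2πi/3}) with β(0)=0. Then c and b are strictly increasing on (0, π). -/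
open Real Set

/-! Differentiating `cos β = 1 + (cos φ - 1) ω`, with `ω = e^{2πi/3}`, gives
`β' = sin φ · ω / sin β`. Writing `β = c + ib` with `b > 0`, the real and imaginary parts of the
defining equation force `cos c, sin c > 0` and `(sin β).re < √3 (sin β).im`, i.e.
`arg (sin β) ∈ (π/6, π/2)`. Hence `arg (ω / sin β) = 2π/3 - arg (sin β) ∈ (π/6, π/2)`, so both
components of `β'` are positive. -/

namespace Complex

lemma cos_re_eq (z : ℂ) : (cos z).re = Real.cos z.re * Real.cosh z.im := by
  rw [cos_eq, ← ofReal_cos, ← ofReal_cosh, ← ofReal_sin, ← ofReal_sinh]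
  simp [-ofReal_cos, -ofReal_sin, -ofReal_cosh, -ofReal_sinh]

lemma cos_im_eq (z : ℂ) : (cos z).im = -(Real.sin z.re * Real.sinh z.im) := by
  rw [cos_eq, ← ofReal_cos, ← ofReal_cosh, ← ofReal_sin, ← ofReal_sinh]
  simp [-ofReal_cos, -ofReal_sin, -ofReal_cosh, -ofReal_sinh]

lemma sin_re_eq (z : ℂ) : (sin z).re = Real.sin z.re * Real.cosh z.im := by
  rw [sin_eq, ← ofReal_cos, ← ofReal_cosh, ← ofReal_sin, ← ofReal_sinh]
  simp [-ofReal_cos, -ofReal_sin, -ofReal_cosh, -ofReal_sinh]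

lemma sin_im_eq (z : ℂ) : (sin z).im = Real.cos z.re * Real.sinh z.im := by
  rw [sin_eq, ← ofReal_cos, ← ofReal_cosh, ← ofReal_sin, ← ofReal_sinh]
  simp [-ofReal_cos, -ofReal_sin, -ofReal_cosh, -ofReal_sinh]

lemma exp_two_pi_mul_I_div_three : exp (2 * π * I / 3) = ⟨-1 / 2, √3 / 2⟩ := by
  have h : 2 * π * I / 3 = ((π - π / 3 : ℝ) : ℂ) * I := by push_cast; ring
  rw [h, exp_mul_I, ← ofReal_cos, ← ofReal_sin, Real.cos_pi_sub, Real.sin_pi_sub,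
    Real.cos_pi_div_three, Real.sin_pi_div_three]
  apply Complex.ext <;> norm_num

end Complex

lemma strictMonoOn_clm_comp_of_deriv_pos {E : Type*} [NormedAddCommGroup E] [NormedSpace ℝ E]
    {D : Set ℝ} (hDc : Convex ℝ D) (hDo : IsOpen D) {f : ℝ → E} (L : E →L[ℝ] ℝ)
    (hf : ∀ x ∈ D, DifferentiableAt ℝ f x) (hpos : ∀ x ∈ D, 0 < L (deriv f x)) :
    StrictMonoOn (fun x => L (f x)) D := by
  refine strictMonoOn_of_deriv_pos hDc
    (fun x hx => (L.continuous.continuousAt.comp (hf x hx).continuousAt).continuousWithinAt)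
    fun x hx => ?_
  rw [hDo.interior_eq] at hx
  change 0 < deriv (L ∘ f) x
  rw [(L.hasFDerivAt.comp_hasDerivAt x (hf x hx).hasDerivAt).deriv]
  exact hpos x hx

lemma sin_mul_deriv_eq_of_cos_comp_eq {β : ℝ → ℂ} {a : ℂ} {φ : ℝ} {s : Set ℝ}
    (hs : s ∈ nhds φ) (hβ : DifferentiableAt ℝ β φ)
    (hcos : ∀ x ∈ s, Complex.cos (β x) = 1 + ((Real.cos x : ℂ) - 1) * a) :
    Complex.sin (β φ) * deriv β φ = Real.sin φ * a := by
  have hlhs := (Complex.hasDerivAt_cos (β φ)).comp φ hβ.hasDerivAt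
  have hrhs : HasDerivAt (fun x : ℝ => 1 + ((Real.cos x : ℂ) - 1) * a)
      (((-Real.sin φ : ℝ) : ℂ) * a) φ :=
    (((Real.hasDerivAt_cos φ).ofReal_comp.sub_const 1).mul_const a).const_add 1
  have heq : Complex.cos ∘ β =ᶠ[nhds φ] fun x => 1 + ((Real.cos x : ℂ) - 1) * a :=
    Filter.eventually_of_mem hs hcos
  have := (hlhs.congr_of_eventuallyEq heq.symm).unique hrhs
  rw [Complex.ofReal_neg] at this
  linear_combination -this

lemma sq_sin_mul_cosh_lt {c b t : ℝ} (ht : 0 < t)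
    (hA : cos c * cosh b = 1 + t / 2) (hB : sin c * sinh b = √3 * t / 2) :
    (sin c * cosh b) ^ 2 < 3 * (cos c * sinh b) ^ 2 := by
  have hA2 : cos c ^ 2 * cosh b ^ 2 = (1 + t / 2) ^ 2 := by rw [← mul_pow, hA]
  have hB2 : sin c ^ 2 * sinh b ^ 2 = 3 * t ^ 2 / 4 := by
    rw [← mul_pow, hB, div_pow, mul_pow, sq_sqrt zero_le_three]; ring
  have hsum : cosh b ^ 2 + cos c ^ 2 = 2 + t + t ^ 2 := by
    linear_combination hB2 + hA2 - sinh b ^ 2 * sin_sq_add_cos_sq c +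
      (1 - cos c ^ 2) * cosh_sq b
  have hgap : 3 * (cos c * sinh b) ^ 2 - (sin c * cosh b) ^ 2 = 2 * sin c ^ 2 + 3 * t := by
    linear_combination -3 * cos c ^ 2 * cosh_sq b - (cosh b ^ 2 + 2) * sin_sq_add_cos_sq c +
      4 * hA2 - hsum
  linarith [sq_nonneg (sin c)]

lemma Complex.sin_re_pos_and_lt_sqrt_three_mul_im {z : ℂ} {t : ℝ} (hz : 0 < z.im) (ht : 0 < t)
    (hcos : cos z = 1 - t * exp (2 * π * I / 3)) :
    0 < (sin z).re ∧ (sin z).re < √3 * (sin z).im := by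
  rw [exp_two_pi_mul_I_div_three] at hcos
  have hre := congrArg re hcos
  have him := congrArg im hcos
  simp only [cos_re_eq, cos_im_eq, sub_re, sub_im, one_re, one_im, re_ofReal_mul,
    im_ofReal_mul] at hre him
  have hA : Real.cos z.re * Real.cosh z.im = 1 + t / 2 := by linarith
  have hB : Real.sin z.re * Real.sinh z.im = √3 * t / 2 := by linarith
  have hsinh : 0 < Real.sinh z.im := Real.sinh_pos_iff.2 hz
  have hcosh : 0 < Real.cosh z.im := Real.cosh_pos _
  have hsin_re : 0 < Real.sin z.re :=
    pos_of_mul_pos_left (hB ▸ by positivity) hsinh.le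
  have hcos_re : 0 < Real.cos z.re :=
    pos_of_mul_pos_left (hA ▸ by positivity) hcosh.le
  rw [sin_re_eq, sin_im_eq]
  refine ⟨mul_pos hsin_re hcosh, abs_lt_of_sq_lt_sq' ?_ (by positivity) |>.2⟩
  rw [mul_pow √3, sq_sqrt zero_le_three]
  exact sq_sin_mul_cosh_lt ht hA hB

lemma Complex.exp_two_pi_mul_I_div_three_div_pos {w : ℂ} (hre : 0 < w.re)
    (hlt : w.re < √3 * w.im) :
    0 < (exp (2 * π * I / 3) / w).re ∧ 0 < (exp (2 * π * I / 3) / w).im := by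
  have hw : 0 < normSq w := normSq_pos.2 fun h => by simp [h] at hre
  have him : 0 < w.im := pos_of_mul_pos_right (hre.trans hlt) (sqrt_nonneg 3)
  rw [exp_two_pi_mul_I_div_three, div_re, div_im, ← add_div, ← sub_div]
  refine ⟨div_pos ?_ hw, div_pos ?_ hw⟩ <;> dsimp only
  · linarith
  · linarith [mul_pos (sqrt_pos.2 zero_lt_three) hre]

theorem re_im_branch_strictMono_general (β : ℝ → ℂ)
    (hdiff : ∀ φ ∈ Ioo (0 : ℝ) π, DifferentiableAt ℝ β φ)
    (hcos : ∀ φ ∈ Icc (0 : ℝ) π, Complex.cos (β φ) =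
      1 + ((Real.cos φ : ℂ) - 1) * Complex.exp (2 * Real.pi * Complex.I / 3))
    (him : ∀ φ ∈ Ioo (0 : ℝ) π, 0 < (β φ).im) :
    StrictMonoOn (fun φ => (β φ).re) (Ioo 0 π) ∧
      StrictMonoOn (fun φ => (β φ).im) (Ioo 0 π) := by
  have hderiv : ∀ φ ∈ Ioo 0 π, 0 < (deriv β φ).re ∧ 0 < (deriv β φ).im := by
    intro φ hφ
    have hsinφ : 0 < Real.sin φ := sin_pos_of_pos_of_lt_pi hφ.1 hφ.2
    have ht : 0 < 1 - Real.cos φ := by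
      linarith [cos_lt_cos_of_nonneg_of_le_pi le_rfl hφ.2.le hφ.1, cos_zero]
    obtain ⟨hre, hlt⟩ := Complex.sin_re_pos_and_lt_sqrt_three_mul_im (him φ hφ) ht
      (by rw [hcos φ (Ioo_subset_Icc_self hφ)]; push_cast; ring)
    have hsin : Complex.sin (β φ) ≠ 0 := fun h => by simp [h] at hre
    have hD : deriv β φ =
        Real.sin φ * (Complex.exp (2 * π * Complex.I / 3) / Complex.sin (β φ)) := by
      rw [mul_div_assoc', eq_div_iff hsin, mul_comm,
        sin_mul_deriv_eq_of_cos_comp_eq (Ioo_mem_nhds hφ.1 hφ.2) (hdiff φ hφ)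
          fun x hx => hcos x (Ioo_subset_Icc_self hx)]
    obtain ⟨h1, h2⟩ := Complex.exp_two_pi_mul_I_div_three_div_pos hre hlt
    rw [hD, Complex.re_ofReal_mul, Complex.im_ofReal_mul]
    exact ⟨mul_pos hsinφ h1, mul_pos hsinφ h2⟩
  exact ⟨strictMonoOn_clm_comp_of_deriv_pos (convex_Ioo 0 π) isOpen_Ioo Complex.reCLM hdiff
      fun φ hφ => (hderiv φ hφ).1,
    strictMonoOn_clm_comp_of_deriv_pos (convex_Ioo 0 π) isOpen_Ioo Complex.imCLM hdiff
      fun φ hφ => (hderiv φ hφ).2⟩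

theorem re_im_branch_strictMono (β : ℝ → ℂ)
    (hβ0 : β 0 = 0)
    (hcont : ContinuousOn β (Icc 0 π))
    (hdiff : ∀ φ ∈ Ioo (0 : ℝ) π, DifferentiableAt ℝ β φ)
    (hcos : ∀ φ ∈ Icc (0 : ℝ) π, Complex.cos (β φ) =
      1 + ((Real.cos φ : ℂ) - 1) * Complex.exp (2 * Real.pi * Complex.I / 3))
    (him : ∀ φ ∈ Ioo (0 : ℝ) π, 0 < (β φ).im) :
    StrictMonoOn (fun φ => (β φ).re) (Ioo 0 π) ∧
      StrictMonoOn (fun φ => (β φ).im) (Ioo 0 π) :=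
  re_im_branch_strictMono_general β hdiff hcos him
end

section
/- With c = Re β and b = Im β as above, the functions φ ↦ c(φ)/φ and φ ↦ b(φ)/φ are strictly decreasing on (0, π). In particular b(φ) > φ·b(π)/π > φ/2 for φ ∈ (0,π). -/
open Real Set Filter Topology


noncomputable def TT (φ : ℝ) : ℝ := 1 - Real.cos φ
noncomputable def SS (φ : ℝ) : ℝ := Real.sqrt (TT φ^2 + 2*TT φ + 4)
noncomputable def QQ (φ : ℝ) : ℝ := Real.sqrt (TT φ * (SS φ + TT φ + 1)/2)
noncomputable def FB (φ : ℝ) : ℝ := Real.arsinh (QQ φ)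
noncomputable def FC (φ : ℝ) : ℝ := Real.arccos ((SS φ - TT φ)/2)

lemma TT_nonneg (φ : ℝ) : 0 ≤ TT φ := by
  have := Real.cos_le_one φ; simp [TT]; linarith

lemma TT_le_two (φ : ℝ) : TT φ ≤ 2 := by
  have := Real.neg_one_le_cos φ; simp [TT]; linarith

lemma SS_pos (φ : ℝ) : 0 < SS φ := by
  have h := TT_nonneg φ
  apply Real.sqrt_pos.2; nlinarith

lemma SS_sq (φ : ℝ) : SS φ^2 = TT φ^2 + 2*TT φ + 4 := by
  have h := TT_nonneg φ
  apply Real.sq_sqrt; nlinarith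

lemma SS_gt (φ : ℝ) : TT φ + 1 < SS φ := by
  have h := TT_nonneg φ; have h2 := SS_sq φ; have h3 := SS_pos φ
  nlinarith

lemma QQ_sq (φ : ℝ) : QQ φ^2 = TT φ * (SS φ + TT φ + 1)/2 := by
  have h := TT_nonneg φ; have h2 := SS_pos φ
  apply Real.sq_sqrt; positivity

lemma TT_pos {φ : ℝ} (h0 : 0 < φ) (hπ : φ ≤ π) : 0 < TT φ := by
  have h1 : Real.cos φ < Real.cos 0 :=
    Real.strictAntiOn_cos ⟨le_refl 0, Real.pi_nonneg⟩ ⟨h0.le, hπ⟩ h0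
  simp [Real.cos_zero] at h1
  simp [TT]; linarith

lemma QQ_pos {φ : ℝ} (h0 : 0 < φ) (hπ : φ ≤ π) : 0 < QQ φ := by
  have h := TT_pos h0 hπ; have h2 := SS_pos φ
  apply Real.sqrt_pos.2; positivity

lemma hasDerivAt_TT (φ : ℝ) : HasDerivAt TT (Real.sin φ) φ := by
  have := (Real.hasDerivAt_cos φ).const_sub 1
  exact this.congr_deriv (neg_neg _)

lemma hasDerivAt_SS (φ : ℝ) :
    HasDerivAt SS ((2*TT φ*Real.sin φ + 2*Real.sin φ)/(2*SS φ)) φ := by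
  have hp : HasDerivAt (fun ψ => TT ψ^2 + 2*TT ψ + 4)
      (2*TT φ*Real.sin φ + 2*Real.sin φ) φ := by
    have h1 := (((hasDerivAt_TT φ).pow 2).add ((hasDerivAt_TT φ).const_mul 2)).add_const 4
    exact h1.congr_deriv (by norm_num)
  have hne : TT φ^2 + 2*TT φ + 4 ≠ 0 := by have := TT_nonneg φ; positivity
  exact hp.sqrt hne

lemma sqrt_one_add_QQ_sq (φ : ℝ) : Real.sqrt (1 + QQ φ^2) = (TT φ + SS φ)/2 := by
  have h := TT_nonneg φ; have h2 := SS_pos φ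
  rw [show 1 + QQ φ^2 = ((TT φ + SS φ)/2)^2 by
    linear_combination QQ_sq φ - (1/4 : ℝ) * SS_sq φ]
  exact Real.sqrt_sq (by positivity)

lemma hasDerivAt_QQ {φ : ℝ} (h0 : 0 < φ) (hπ : φ ≤ π) :
    HasDerivAt QQ (Real.sin φ * QQ φ * (TT φ + SS φ) / (2 * TT φ * SS φ)) φ := by
  have ht := TT_pos h0 hπ; have hs := SS_pos φ; have hq := QQ_pos h0 hπ
  have hs2 := SS_sq φ; have hq2 := QQ_sq φ
  have hx : HasDerivAt (fun ψ => TT ψ * (SS ψ + TT ψ + 1)/2)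
      ((Real.sin φ * (SS φ + TT φ + 1) +
        TT φ * ((2*TT φ*Real.sin φ + 2*Real.sin φ)/(2*SS φ) + Real.sin φ))/2) φ := by
    exact (((hasDerivAt_TT φ).mul (((hasDerivAt_SS φ).add (hasDerivAt_TT φ)).add_const 1)).div_const 2)
  have hxne : TT φ * (SS φ + TT φ + 1)/2 ≠ 0 := by positivity
  have := hx.sqrt hxne
  refine this.congr_deriv ?_; symm
  rw [show Real.sqrt (TT φ * (SS φ + TT φ + 1)/2) = QQ φ from rfl]
  field_simp
  linear_combination ((2:ℝ)*Real.sin φ*TT φ + (2:ℝ)*Real.sin φ*SS φ) * hq2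

lemma hasDerivAt_FB {φ : ℝ} (h0 : 0 < φ) (hπ : φ ≤ π) :
    HasDerivAt FB (Real.sin φ * QQ φ / (TT φ * SS φ)) φ := by
  have ht := TT_pos h0 hπ; have hs := SS_pos φ; have hq := QQ_pos h0 hπ
  have := (hasDerivAt_QQ h0 hπ).arsinh
  refine this.congr_deriv ?_; symm
  rw [sqrt_one_add_QQ_sq φ, smul_eq_mul]
  field_simp

lemma H_lt_one {φ : ℝ} (h0 : 0 < φ) (hπ : φ ≤ π) : (SS φ - TT φ)/2 < 1 := by
  have ht := TT_pos h0 hπ; have hs := SS_pos φ; have hs2 := SS_sq φ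
  nlinarith

lemma H_pos (φ : ℝ) : 0 < (SS φ - TT φ)/2 := by
  have := SS_gt φ; linarith

lemma sqrt_one_sub_H_sq {φ : ℝ} (h0 : 0 < φ) (hπ : φ ≤ π) :
    Real.sqrt (1 - ((SS φ - TT φ)/2)^2) = Real.sqrt 3 * TT φ / (2 * QQ φ) := by
  have ht := TT_pos h0 hπ; have hs := SS_pos φ; have hq := QQ_pos h0 hπ
  have hs2 := SS_sq φ; have hq2 := QQ_sq φ
  have h3 : Real.sqrt 3 ^ 2 = 3 := Real.sq_sqrt (by norm_num)
  have h3p : (0:ℝ) < Real.sqrt 3 := Real.sqrt_pos.2 (by norm_num)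
  rw [show 1 - ((SS φ - TT φ)/2)^2 = (Real.sqrt 3 * TT φ / (2 * QQ φ))^2 by
    field_simp
    linear_combination ((2:ℝ)*TT φ*SS φ + (-1:ℝ)*SS φ^2 + (-1:ℝ)*TT φ^2 + (4:ℝ)) * hq2 + ((-1:ℝ)*TT φ^2) * h3 + ((1/2:ℝ)*TT φ^2 + (-1/2:ℝ)*TT φ*SS φ + (-1/2:ℝ)*TT φ) * hs2]
  exact Real.sqrt_sq (by positivity)

lemma hasDerivAt_FC {φ : ℝ} (h0 : 0 < φ) (hπ : φ ≤ π) :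
    HasDerivAt FC (Real.sqrt 3 * Real.sin φ / (2 * SS φ * QQ φ)) φ := by
  have ht := TT_pos h0 hπ; have hs := SS_pos φ; have hq := QQ_pos h0 hπ
  have hs2 := SS_sq φ; have hq2 := QQ_sq φ
  have h3 : Real.sqrt 3 ^ 2 = 3 := Real.sq_sqrt (by norm_num)
  have h3p : (0:ℝ) < Real.sqrt 3 := Real.sqrt_pos.2 (by norm_num)
  have hH : HasDerivAt (fun ψ => (SS ψ - TT ψ)/2)
      (((2*TT φ*Real.sin φ + 2*Real.sin φ)/(2*SS φ) - Real.sin φ)/2) φ :=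
    ((hasDerivAt_SS φ).sub (hasDerivAt_TT φ)).div_const 2
  have h1 : (SS φ - TT φ)/2 ≠ -1 := by have := H_pos φ; linarith
  have h2 : (SS φ - TT φ)/2 ≠ 1 := (H_lt_one h0 hπ).ne
  have hcomp := (Real.hasDerivAt_arccos h1 h2).comp φ hH
  refine hcomp.congr_deriv ?_; symm
  rw [sqrt_one_sub_H_sq h0 hπ]
  field_simp
  linear_combination ((2:ℝ)*Real.sin φ*TT φ + (-2:ℝ)*Real.sin φ*SS φ + (2:ℝ)*Real.sin φ) * hq2 + ((1:ℝ)*Real.sin φ*TT φ) * h3 + ((-1:ℝ)*Real.sin φ*TT φ) * hs2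


noncomputable def PP (τ : ℝ) : ℝ := τ^2 + 2*τ + 4
noncomputable def W (τ : ℝ) : ℝ := (2-τ)*(Real.sqrt (PP τ)+τ+1)/(2*(PP τ))
noncomputable def V (τ : ℝ) : ℝ := 3*(2-τ)/(2*(PP τ)*(Real.sqrt (PP τ)+τ+1))

lemma PP_pos (τ : ℝ) : 0 < PP τ := by unfold PP; nlinarith [sq_nonneg (τ+1)]

lemma sqrtPP_pos (τ : ℝ) : 0 < Real.sqrt (PP τ) := Real.sqrt_pos.2 (PP_pos τ)

lemma sqrtPP_sq (τ : ℝ) : Real.sqrt (PP τ)^2 = PP τ := Real.sq_sqrt (PP_pos τ).le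

lemma sqrtPP_ge {τ : ℝ} (h : 0 ≤ τ) : 2 ≤ Real.sqrt (PP τ) := by
  rw [show (2:ℝ) = Real.sqrt 4 by rw [show (4:ℝ) = 2^2 by norm_num, Real.sqrt_sq]; norm_num]
  apply Real.sqrt_le_sqrt; unfold PP; nlinarith

lemma W_nonneg {τ : ℝ} (h0 : 0 ≤ τ) (h2 : τ ≤ 2) : 0 ≤ W τ := by
  have := sqrtPP_pos τ; have := PP_pos τ; unfold W
  have h22 : (0:ℝ) ≤ 2 - τ := by linarith
  positivity

lemma V_nonneg {τ : ℝ} (h0 : 0 ≤ τ) (h2 : τ ≤ 2) : 0 ≤ V τ := by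
  have := sqrtPP_pos τ; have := PP_pos τ; unfold V
  have h22 : (0:ℝ) ≤ 2 - τ := by linarith
  positivity

lemma continuous_W : Continuous W := by
  unfold W PP
  apply Continuous.div
  · fun_prop
  · fun_prop
  · intro τ; nlinarith [sq_nonneg (τ+1)]

lemma hasDerivAt_PP (τ : ℝ) : HasDerivAt PP (2*τ+2) τ := by
  unfold PP
  have h := (((hasDerivAt_id τ).pow 2).add ((hasDerivAt_id τ).const_mul 2)).add_const (4:ℝ)
  simp only [id] at h
  exact h.congr_deriv (by norm_num)

lemma W_deriv_neg {τ : ℝ} (h0 : 0 < τ) (h2 : τ < 2) : deriv W τ < 0 := by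
  set u := Real.sqrt (PP τ) with hu
  have hu2 : u^2 = PP τ := sqrtPP_sq τ
  have hupos : 0 < u := sqrtPP_pos τ
  have huge : 2 ≤ u := sqrtPP_ge h0.le
  have hppos := PP_pos τ
  have hs : HasDerivAt (fun τ => Real.sqrt (PP τ)) ((2*τ+2)/(2*u)) τ :=
    (hasDerivAt_PP τ).sqrt hppos.ne'
  have hN : HasDerivAt (fun τ => (2-τ)*(Real.sqrt (PP τ)+τ+1))
      ((-1)*(u+τ+1) + (2-τ)*((2*τ+2)/(2*u)+1)) τ := by
    exact (((hasDerivAt_id τ).const_sub 2).mul ((hs.add (hasDerivAt_id τ)).add_const 1))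
  have hD : HasDerivAt (fun τ => 2*(PP τ)) (2*(2*τ+2)) τ := (hasDerivAt_PP τ).const_mul 2
  have hW : HasDerivAt W
      ((((-1)*(u+τ+1) + (2-τ)*((2*τ+2)/(2*u)+1)) * (2*(PP τ)) -
        (2-τ)*(u+τ+1) * (2*(2*τ+2))) / (2*(PP τ))^2) τ := by
    exact hN.div hD (by positivity)
  rw [hW.deriv]
  apply div_neg_of_neg_of_pos _ (by positivity)
  rw [show ((-1)*(u+τ+1) + (2-τ)*((2*τ+2)/(2*u)+1)) * (2*(PP τ)) -
        (2-τ)*(u+τ+1) * (2*(2*τ+2))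
      = ((-(u+τ+1)*u + (2-τ)*(τ+1) + (2-τ)*u) * (2*(PP τ)) -
        (2-τ)*(u+τ+1) * (2*(2*τ+2))*u)/u by field_simp; ring]
  apply div_neg_of_neg_of_pos _ hupos
  have key : (-(u+τ+1)*u + (2-τ)*(τ+1) + (2-τ)*u) * (2*(PP τ)) -
      (2-τ)*(u+τ+1) * (2*(2*τ+2))*u
      = 2*(PP τ)*(-(PP τ) - (2-τ)*(τ+1)) - 6*τ*(τ+4)*u := by
    have hPPdef : PP τ = τ^2+2*τ+4 := rfl
    linear_combination (-2*(PP τ) - 4*(τ+1)*(2-τ)) * hu2 + ((2-4*τ)*u) * hPPdef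
  rw [key]
  nlinarith [hppos, h0, h2, hupos, mul_pos hppos hppos, mul_pos (mul_pos h0 hupos)
    (show (0:ℝ) < τ+4 by linarith),
    mul_pos (mul_pos hppos (sub_pos.2 h2)) (show (0:ℝ) < τ+1 by linarith)]

lemma W_anti : StrictAntiOn W (Icc 0 2) := by
  apply strictAntiOn_of_deriv_neg (convex_Icc 0 2) continuous_W.continuousOn
  rw [interior_Icc]
  exact fun τ hτ => W_deriv_neg hτ.1 hτ.2

lemma V_anti : StrictAntiOn V (Icc 0 2) := by
  intro a ha b hb hab
  have hpa := PP_pos a; have hpb := PP_pos b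
  have hua := sqrtPP_pos a; have hub := sqrtPP_pos b
  have hple : PP a ≤ PP b := by unfold PP; nlinarith [ha.1]
  have hule : Real.sqrt (PP a) ≤ Real.sqrt (PP b) := Real.sqrt_le_sqrt hple
  have hea : 0 < Real.sqrt (PP a)+a+1 := by nlinarith [ha.1]
  have heb : 0 < Real.sqrt (PP b)+b+1 := by nlinarith [hb.1]
  have hda : 0 < PP a * (Real.sqrt (PP a)+a+1) := mul_pos hpa hea
  have hdb : 0 < PP b * (Real.sqrt (PP b)+b+1) := mul_pos hpb heb
  have hdle : PP a * (Real.sqrt (PP a)+a+1) ≤ PP b * (Real.sqrt (PP b)+b+1) :=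
    mul_le_mul hple (by linarith) hea.le hpb.le
  have h2b : (0:ℝ) ≤ 2 - b := by linarith [hb.2]
  have k1 : (2-b) * (PP a*(Real.sqrt (PP a)+a+1)) ≤ (2-b) * (PP b*(Real.sqrt (PP b)+b+1)) :=
    mul_le_mul_of_nonneg_left hdle h2b
  have k2 : (2-b) * (PP b*(Real.sqrt (PP b)+b+1)) < (2-a) * (PP b*(Real.sqrt (PP b)+b+1)) :=
    mul_lt_mul_of_pos_right (by linarith) hdb
  unfold V
  rw [div_lt_div_iff₀ (by positivity) (by positivity)]
  nlinarith [k1, k2]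

-- extraction lemma
lemma extract (φ : ℝ) (z : ℂ)
    (h : Complex.cos z = 1 + ((Real.cos φ : ℂ) - 1) * Complex.exp (2 * Real.pi * Complex.I / 3)) :
    Real.cos z.re * Real.cosh z.im = (3 - Real.cos φ)/2 ∧
    Real.sin z.re * Real.sinh z.im = Real.sqrt 3 * (1 - Real.cos φ)/2 := by
  have hexp : Complex.exp (2 * Real.pi * Complex.I / 3)
      = Complex.ofReal (-1/2) + Complex.ofReal (Real.sqrt 3 / 2) * Complex.I := by
    have h1 : (2 * Real.pi * Complex.I / 3) = ((2*Real.pi/3 : ℝ) : ℂ) * Complex.I := by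
      push_cast; ring
    rw [h1, Complex.exp_mul_I]
    have hc : Real.cos (2*Real.pi/3) = -1/2 := by
      have : (2*Real.pi/3) = Real.pi - Real.pi/3 := by ring
      rw [this, Real.cos_pi_sub, Real.cos_pi_div_three]; norm_num
    have hs : Real.sin (2*Real.pi/3) = Real.sqrt 3/2 := by
      have : (2*Real.pi/3) = Real.pi - Real.pi/3 := by ring
      rw [this, Real.sin_pi_sub, Real.sin_pi_div_three]
    rw [← Complex.ofReal_cos, ← Complex.ofReal_sin, hc, hs]
  have hz : Complex.cos ((z.re : ℂ) + (z.im : ℂ) * Complex.I)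
      = 1 + ((Real.cos φ : ℂ) - 1) * Complex.exp (2 * Real.pi * Complex.I / 3) := by
    rw [Complex.re_add_im]; exact h
  rw [Complex.cos_add_mul_I, hexp] at hz
  have hre := congrArg Complex.re hz
  have him := congrArg Complex.im hz
  simp [Complex.cos_ofReal_re, Complex.sin_ofReal_re, Complex.cosh_ofReal_re,
    Complex.sinh_ofReal_re] at hre him
  constructor <;> linarith

lemma im_id (φ : ℝ) (z : ℂ) (ht : 0 < TT φ) (hb : 0 < z.im)
    (hE1 : Real.cos z.re * Real.cosh z.im = (3 - Real.cos φ)/2)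
    (hE2 : Real.sin z.re * Real.sinh z.im = Real.sqrt 3 * (1 - Real.cos φ)/2) :
    z.im = FB φ ∧ Real.cos z.re = (SS φ - TT φ)/2 ∧ 0 < Real.sin z.re := by
  set t := TT φ with htdef
  set s := SS φ with hsdef
  set q := QQ φ with hqdef
  have hs2 : s^2 = t^2 + 2*t + 4 := SS_sq φ
  have hspos : 0 < s := SS_pos φ
  have hsgt : t + 1 < s := SS_gt φ
  have hq2 : q^2 = t*(s+t+1)/2 := by
    rw [hqdef, QQ]; apply Real.sq_sqrt; positivity
  have hqpos : 0 < q := by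
    rw [hqdef, QQ]; apply Real.sqrt_pos.2; positivity
  have h3 : Real.sqrt 3^2 = 3 := Real.sq_sqrt (by norm_num)
  set Y := Real.sinh z.im with hYdef
  set X := Real.cosh z.im with hXdef
  set σ := Real.sin z.re with hσdef
  set γ := Real.cos z.re with hγdef
  have hY : 0 < Y := by rw [hYdef]; exact Real.sinh_pos_iff.2 hb
  have hX2 : X^2 = Y^2 + 1 := by rw [hXdef, hYdef, Real.cosh_sq]
  have hXpos : 0 < X := Real.cosh_pos z.im
  have hγ2 : σ^2 + γ^2 = 1 := Real.sin_sq_add_cos_sq z.re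
  have hE1' : γ * X = (t+2)/2 := by rw [hE1]; simp [htdef, TT]; ring
  have hE2' : σ * Y = Real.sqrt 3 * t / 2 := by rw [hE2]; simp [htdef, TT]
  have hσpos : 0 < σ := by
    have hB : 0 < Real.sqrt 3 * t / 2 := by
      have : 0 < Real.sqrt 3 := Real.sqrt_pos.2 (by norm_num)
      positivity
    nlinarith
  have hG : Y^4 - (t^2+t)*Y^2 - 3*t^2/4 = 0 := by
    linear_combination (σ^2*Y^2 - Y^2) * hX2 - X^2*Y^2 * hγ2 +
      Y^2*(γ*X+(t+2)/2) * hE1' + (Y^2+1)*(σ*Y+Real.sqrt 3*t/2) * hE2' +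
      (Y^2+1)*(t^2/4) * h3
  have hGq : q^4 - (t^2+t)*q^2 - 3*t^2/4 = 0 := by
    linear_combination (q^2 + t*(s+t+1)/2 - t^2 - t) * hq2 + (t^2/4) * hs2
  have hfac : (Y^2 - q^2) * (Y^2 + q^2 - (t^2+t)) = 0 := by
    linear_combination hG - hGq
  have hYq : Y^2 = q^2 := by
    rcases mul_eq_zero.1 hfac with h | h
    · linarith
    · exfalso; nlinarith [hY, hqpos, ht]
  have hYq' : Y = q := by
    rw [← Real.sqrt_sq hY.le, ← Real.sqrt_sq hqpos.le, hYq]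
  have him : z.im = FB φ := by
    rw [FB, ← hqdef, ← hYq', hYdef, Real.arsinh_sinh]
  refine ⟨him, ?_, hσpos⟩
  have hXeq : X = (t+s)/2 := by
    have h1 : X^2 = ((t+s)/2)^2 := by
      rw [hX2, hYq]; linear_combination hq2 - (1/4 : ℝ) * hs2
    have h2 : 0 < (t+s)/2 := by linarith
    rw [← Real.sqrt_sq hXpos.le, h1, Real.sqrt_sq h2.le]
  have h4 : γ * ((t+s)/2) = (t+2)/2 := by rw [← hXeq]; exact hE1'
  have hts : (t + s)/2 ≠ 0 := by positivity
  have h5 : (s-t)/2 * ((t+s)/2) = (t+2)/2 := by linear_combination (1/4 : ℝ) * hs2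
  exact mul_right_cancel₀ hts (h4.trans h5.symm)



lemma div_strictAntiOn {f f' : ℝ → ℝ} {a : ℝ} (ha : 0 < a) (hf0 : f 0 = 0)
    (hc : ContinuousOn f (Icc 0 a)) (hd : ∀ x ∈ Ioo 0 a, HasDerivAt f (f' x) x)
    (hanti : StrictAntiOn f' (Ioo 0 a)) :
    StrictAntiOn (fun x => f x / x) (Ioc 0 a) := by
  intro x hx y hy hxy
  obtain ⟨η, hη, hηeq⟩ := exists_hasDerivAt_eq_slope f f' hx.1
    (hc.mono (Icc_subset_Icc le_rfl hx.2))
    (fun z hz => hd z ⟨hz.1, lt_of_lt_of_le hz.2 hx.2⟩)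
  obtain ⟨ξ, hξ, hξeq⟩ := exists_hasDerivAt_eq_slope f f' hxy
    (hc.mono (Icc_subset_Icc hx.1.le hy.2))
    (fun z hz => hd z ⟨lt_trans hx.1 hz.1, lt_of_lt_of_le hz.2 hy.2⟩)
  have hηm : η ∈ Ioo 0 a := ⟨hη.1, lt_of_lt_of_le hη.2 hx.2⟩
  have hξm : ξ ∈ Ioo 0 a := ⟨lt_trans hx.1 hξ.1, lt_of_lt_of_le hξ.2 hy.2⟩
  have hlt : f' ξ < f' η := hanti hηm hξm (lt_trans hη.2 hξ.1)
  rw [hηeq, hξeq] at hlt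
  rw [hf0, sub_zero] at hlt
  have hx0 : (0:ℝ) < x := hx.1
  have hy0 : (0:ℝ) < y := lt_trans hx0 hxy
  simp only
  rw [div_lt_div_iff₀ hy0 hx0]
  rw [div_lt_div_iff₀ (by linarith : (0:ℝ) < y - x) (by linarith : (0:ℝ) < x - 0)] at hlt
  nlinarith [hlt]

lemma sin_sq_TT (φ : ℝ) : Real.sin φ^2 = TT φ * (2 - TT φ) := by
  simp only [TT]; linear_combination Real.sin_sq_add_cos_sq φ

lemma TT_lt {x y : ℝ} (hx : 0 ≤ x) (hy : y ≤ π) (hxy : x < y) : TT x < TT y := by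
  have := Real.strictAntiOn_cos ⟨hx, by linarith⟩ ⟨by linarith, hy⟩ hxy
  simp only [TT]; linarith

lemma FBder_eq {φ : ℝ} (h0 : 0 < φ) (hπ : φ < π) :
    Real.sin φ * QQ φ / (TT φ * SS φ) = Real.sqrt (W (TT φ)) := by
  have ht := TT_pos h0 hπ.le; have hs := SS_pos φ; have hq := QQ_pos h0 hπ.le
  have hs2 := SS_sq φ; have hq2 := QQ_sq φ; have hsin2 := sin_sq_TT φ
  have hsin : 0 < Real.sin φ := Real.sin_pos_of_pos_of_lt_pi h0 hπ
  rw [← Real.sqrt_sq (show (0:ℝ) ≤ Real.sin φ * QQ φ / (TT φ * SS φ) by positivity)]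
  congr 1
  unfold W
  rw [show Real.sqrt (PP (TT φ)) = SS φ from rfl, show PP (TT φ) = TT φ^2+2*TT φ+4 from rfl]
  field_simp
  linear_combination ((8)*Real.sin φ^2 + (4)*TT φ*Real.sin φ^2 + (2)*TT φ^2*Real.sin φ^2) * hq2 + ((4)*TT φ + (4)*TT φ*SS φ + (6)*TT φ^2 + (2)*TT φ^2*SS φ + (3)*TT φ^3 + TT φ^3*SS φ + TT φ^4) * hsin2 + ((-2)*TT φ^2 + (-2)*TT φ^2*SS φ + (-1)*TT φ^3 + TT φ^3*SS φ + TT φ^4) * hs2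

lemma FCder_eq {φ : ℝ} (h0 : 0 < φ) (hπ : φ < π) :
    Real.sqrt 3 * Real.sin φ / (2 * SS φ * QQ φ) = Real.sqrt (V (TT φ)) := by
  have ht := TT_pos h0 hπ.le; have hs := SS_pos φ; have hq := QQ_pos h0 hπ.le
  have hs2 := SS_sq φ; have hq2 := QQ_sq φ; have hsin2 := sin_sq_TT φ
  have hsin : 0 < Real.sin φ := Real.sin_pos_of_pos_of_lt_pi h0 hπ
  have h3 : Real.sqrt 3 ^ 2 = 3 := Real.sq_sqrt (by norm_num)
  have h3p : (0:ℝ) < Real.sqrt 3 := Real.sqrt_pos.2 (by norm_num)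
  rw [← Real.sqrt_sq (show (0:ℝ) ≤ Real.sqrt 3 * Real.sin φ / (2 * SS φ * QQ φ) by positivity)]
  congr 1
  unfold V
  rw [show Real.sqrt (PP (TT φ)) = SS φ from rfl, show PP (TT φ) = TT φ^2+2*TT φ+4 from rfl]
  field_simp
  linear_combination ((6:ℝ)*TT φ*SS φ^2 + (-12:ℝ)*SS φ^2) * hq2 + ((4:ℝ)*Real.sin φ^2 + (6:ℝ)*Real.sin φ^2*TT φ + (2:ℝ)*Real.sin φ^2*TT φ*SS φ + (3:ℝ)*Real.sin φ^2*TT φ^2 + (1:ℝ)*Real.sin φ^2*TT φ^2*SS φ + (1:ℝ)*Real.sin φ^2*TT φ^3 + (4:ℝ)*Real.sin φ^2*SS φ) * h3 + ((3:ℝ)*TT φ^2*SS φ + (3:ℝ)*TT φ^3 + (-3:ℝ)*TT φ^2 + (-6:ℝ)*TT φ*SS φ + (-6:ℝ)*TT φ) * hs2 + ((12:ℝ) + (18:ℝ)*TT φ + (6:ℝ)*TT φ*SS φ + (9:ℝ)*TT φ^2 + (3:ℝ)*TT φ^2*SS φ + (3:ℝ)*TT φ^3 + (12:ℝ)*SS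 φ) * hsin2

lemma FBder_anti : StrictAntiOn (fun φ => Real.sin φ * QQ φ / (TT φ * SS φ)) (Ioo 0 π) := by
  intro x hx y hy hxy
  simp only
  rw [FBder_eq hx.1 hx.2, FBder_eq hy.1 hy.2]
  have hTx : TT x ∈ Icc (0:ℝ) 2 := ⟨TT_nonneg x, TT_le_two x⟩
  have hTy : TT y ∈ Icc (0:ℝ) 2 := ⟨TT_nonneg y, TT_le_two y⟩
  exact Real.sqrt_lt_sqrt (W_nonneg hTy.1 hTy.2)
    (W_anti hTx hTy (TT_lt hx.1.le hy.2.le hxy))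

lemma FCder_anti : StrictAntiOn (fun φ => Real.sqrt 3 * Real.sin φ / (2 * SS φ * QQ φ)) (Ioo 0 π) := by
  intro x hx y hy hxy
  simp only
  rw [FCder_eq hx.1 hx.2, FCder_eq hy.1 hy.2]
  have hTx : TT x ∈ Icc (0:ℝ) 2 := ⟨TT_nonneg x, TT_le_two x⟩
  have hTy : TT y ∈ Icc (0:ℝ) 2 := ⟨TT_nonneg y, TT_le_two y⟩
  exact Real.sqrt_lt_sqrt (V_nonneg hTy.1 hTy.2)
    (V_anti hTx hTy (TT_lt hx.1.le hy.2.le hxy))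

lemma continuous_FB : Continuous FB := by
  unfold FB QQ SS TT
  exact Real.continuous_arsinh.comp (Real.continuous_sqrt.comp (by fun_prop))

lemma continuous_FC : Continuous FC := by
  unfold FC SS TT
  exact Real.continuous_arccos.comp (by fun_prop)

lemma FB_zero : FB 0 = 0 := by
  have h : TT 0 = 0 := by simp [TT]
  simp [FB, QQ, h]

lemma FC_zero : FC 0 = 0 := by
  have h : TT 0 = 0 := by simp [TT]
  have h2 : SS 0 = 2 := by
    rw [SS, h]; norm_num
  rw [FC, h, h2]
  norm_num [Real.arccos_one]

lemma FB_div_anti : StrictAntiOn (fun φ => FB φ / φ) (Ioc 0 π) :=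
  div_strictAntiOn Real.pi_pos FB_zero continuous_FB.continuousOn
    (fun x hx => hasDerivAt_FB hx.1 hx.2.le) FBder_anti

lemma FC_div_anti : StrictAntiOn (fun φ => FC φ / φ) (Ioc 0 π) :=
  div_strictAntiOn Real.pi_pos FC_zero continuous_FC.continuousOn
    (fun x hx => hasDerivAt_FC hx.1 hx.2.le) FCder_anti

lemma TT_pi : TT π = 2 := by simp [TT, Real.cos_pi]; norm_num

lemma FB_pi_gt : π / 2 < FB π := by
  have hT : TT π = 2 := TT_pi
  have hS : SS π = Real.sqrt 12 := by rw [SS, hT]; norm_num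
  have hS' : (3.4516:ℝ) < SS π := by
    rw [hS]
    have : (3.4516:ℝ) = Real.sqrt (3.4516^2) := (Real.sqrt_sq (by norm_num)).symm
    rw [this]
    exact Real.sqrt_lt_sqrt (by positivity) (by norm_num)
  have hQ : (2.54:ℝ) < QQ π := by
    rw [QQ, hT]
    rw [show (2.54:ℝ) = Real.sqrt (2.54^2) from (Real.sqrt_sq (by norm_num)).symm]
    apply Real.sqrt_lt_sqrt (by positivity)
    nlinarith [hS']
  have hexp : Real.exp 1.6 < 5.08 := by
    have h5 : Real.exp 1.6 ^ 5 = Real.exp 8 := by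
      rw [← Real.exp_nat_mul]; norm_num
    have h8 : Real.exp 8 = Real.exp 1 ^ 8 := by
      rw [← Real.exp_nat_mul]; norm_num
    have hb : Real.exp 1 ^ 8 < 2.7182818286 ^ 8 :=
      pow_lt_pow_left₀ Real.exp_one_lt_d9 (Real.exp_pos 1).le (by norm_num)
    have : Real.exp 1.6 ^ 5 < 5.08 ^ 5 := by
      rw [h5, h8]; calc Real.exp 1 ^ 8 < 2.7182818286 ^ 8 := hb
        _ < 5.08 ^ 5 := by norm_num
    exact lt_of_pow_lt_pow_left₀ 5 (by norm_num) this
  have hsinh : Real.sinh (π/2) < 2.54 := by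
    have h1 : Real.sinh (π/2) < Real.exp (π/2) / 2 := by
      rw [Real.sinh_eq]
      have := Real.exp_pos (-(π/2))
      linarith
    have h2 : Real.exp (π/2) ≤ Real.exp 1.6 := by
      apply Real.exp_le_exp.2
      have := Real.pi_lt_d2
      linarith
    linarith
  have : Real.sinh (π/2) < QQ π := by linarith
  calc π/2 = Real.arsinh (Real.sinh (π/2)) := (Real.arsinh_sinh _).symm
    _ < Real.arsinh (QQ π) := Real.arsinh_lt_arsinh.2 this
    _ = FB π := rfl

theorem branch_div_phi_strictAnti (β : ℝ → ℂ)
    (hβ0 : β 0 = 0)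
    (hcont : ContinuousOn β (Icc 0 π))
    (hdiff : ∀ φ ∈ Ioo (0 : ℝ) π, DifferentiableAt ℝ β φ)
    (hcos : ∀ φ ∈ Icc (0 : ℝ) π, Complex.cos (β φ) =
      1 + ((Real.cos φ : ℂ) - 1) * Complex.exp (2 * Real.pi * Complex.I / 3))
    (him : ∀ φ ∈ Ioo (0 : ℝ) π, 0 < (β φ).im) :
    StrictAntiOn (fun φ => (β φ).re / φ) (Ioo 0 π) ∧
      StrictAntiOn (fun φ => (β φ).im / φ) (Ioo 0 π) ∧
      ∀ φ ∈ Ioo (0 : ℝ) π,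
        (β φ).im > φ * (β π).im / π ∧ φ * (β π).im / π > φ / 2 := by
  have hπ0 : (0:ℝ) < π := Real.pi_pos
  -- im at π positive
  have hE := fun φ (hφ : φ ∈ Icc (0:ℝ) π) => extract φ (β φ) (hcos φ hφ)
  have himπ : 0 < (β π).im := by
    have h1 : 0 ≤ (β π).im := by
      have hcw : ContinuousWithinAt (fun ψ => (β ψ).im) (Ioo 0 π) π :=
        ((Complex.continuous_im.comp_continuousOn hcont).continuousWithinAt
          (by simp [hπ0.le] : π ∈ Icc 0 π)).mono Ioo_subset_Icc_self
      haveI hne : (nhdsWithin π (Ioo (0:ℝ) π)).NeBot := by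
        rw [← mem_closure_iff_nhdsWithin_neBot, closure_Ioo hπ0.ne]
        exact ⟨hπ0.le, le_refl π⟩
      exact ge_of_tendsto hcw (eventually_nhdsWithin_of_forall (fun ψ hψ => (him ψ hψ).le))
    have hE2 := (hE π (by simp [hπ0.le])).2
    rcases lt_or_eq_of_le h1 with h | h
    · exact h
    · exfalso
      rw [← h, Real.sinh_zero, mul_zero, Real.cos_pi] at hE2
      have h3p : (0:ℝ) < Real.sqrt 3 := Real.sqrt_pos.2 (by norm_num)
      nlinarith [hE2]
  have him' : ∀ φ ∈ Ioc (0:ℝ) π, 0 < (β φ).im := by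
    intro φ hφ
    rcases lt_or_eq_of_le hφ.2 with h | h
    · exact him φ ⟨hφ.1, h⟩
    · rw [h]; exact himπ
  -- pointwise id for im and cos of re
  have hid : ∀ φ ∈ Ioc (0:ℝ) π, (β φ).im = FB φ ∧
      Real.cos (β φ).re = (SS φ - TT φ)/2 ∧ 0 < Real.sin (β φ).re := by
    intro φ hφ
    have hIcc : φ ∈ Icc (0:ℝ) π := ⟨hφ.1.le, hφ.2⟩
    exact im_id φ (β φ) (TT_pos hφ.1 hφ.2) (him' φ hφ) (hE φ hIcc).1 (hE φ hIcc).2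
  -- range of re via connectedness
  set ρ : ℝ → ℝ := fun ψ => (β ψ).re with hρ
  have hρc : ContinuousOn ρ (Icc 0 π) := Complex.continuous_re.comp_continuousOn hcont
  have himg : IsPreconnected (ρ '' Ioc 0 π) :=
    isPreconnected_Ioc.image ρ (hρc.mono Ioc_subset_Icc_self)
  have hord := himg.ordConnected
  have hsin : ∀ r ∈ ρ '' Ioc 0 π, 0 < Real.sin r := by
    rintro r ⟨ψ, hψ, rfl⟩
    exact (hid ψ hψ).2.2
  have hcl : (0:ℝ) ∈ closure (ρ '' Ioc 0 π) := by
    have h0c : ContinuousWithinAt ρ (Ioc 0 π) 0 :=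
      (hρc.continuousWithinAt (by simp [hπ0.le])).mono Ioc_subset_Icc_self
    have h0m : (0:ℝ) ∈ closure (Ioc (0:ℝ) π) := by
      rw [closure_Ioc hπ0.ne]; exact ⟨le_refl 0, hπ0.le⟩
    have := h0c.mem_closure_image h0m
    rwa [show ρ 0 = 0 by rw [hρ]; simp [hβ0]] at this
  obtain ⟨y, hyd, hyS⟩ : ∃ y, dist 0 y < 1 ∧ y ∈ ρ '' Ioc 0 π := by
    have := Metric.mem_closure_iff.1 hcl 1 (by norm_num)
    obtain ⟨y, hyS, hyd⟩ := this
    exact ⟨y, hyd, hyS⟩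
  have hyabs : |y| < 1 := by rwa [dist_comm, Real.dist_eq, sub_zero] at hyd
  have hy0 : 0 < y := by
    by_contra h
    push_neg at h
    have : Real.sin y ≤ 0 := Real.sin_nonpos_of_nonpos_of_neg_pi_le h
      (by have := abs_lt.1 hyabs; have := Real.pi_gt_three; linarith)
    linarith [hsin y hyS]
  have hyπ : y < π := by
    have := abs_lt.1 hyabs; have := Real.pi_gt_three; linarith
  have hrange : ∀ φ ∈ Ioc (0:ℝ) π, ρ φ ∈ Ioo 0 π := by
    intro φ hφ
    have hmem : ρ φ ∈ ρ '' Ioc 0 π := mem_image_of_mem ρ hφ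
    constructor
    · by_contra h
      push_neg at h
      have h0 : (0:ℝ) ∈ Icc (ρ φ) y := ⟨h, hy0.le⟩
      have := hord.out hmem hyS h0
      have := hsin 0 this
      simp at this
    · by_contra h
      push_neg at h
      have hπm : π ∈ Icc y (ρ φ) := ⟨hyπ.le, h⟩
      have := hord.out hyS hmem hπm
      have := hsin π this
      simp [Real.sin_pi] at this
  have hre : ∀ φ ∈ Ioc (0:ℝ) π, (β φ).re = FC φ := by
    intro φ hφ
    have hr := hrange φ hφ
    have := (hid φ hφ).2.1
    rw [FC, ← this, Real.arccos_cos hr.1.le hr.2.le]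
  -- conclusion
  refine ⟨?_, ?_, ?_⟩
  · intro x hx y' hy' hxy
    have hx' : x ∈ Ioc (0:ℝ) π := ⟨hx.1, hx.2.le⟩
    have hy'' : y' ∈ Ioc (0:ℝ) π := ⟨hy'.1, hy'.2.le⟩
    simp only
    rw [hre x hx', hre y' hy'']
    exact FC_div_anti hx' hy'' hxy
  · intro x hx y' hy' hxy
    have hx' : x ∈ Ioc (0:ℝ) π := ⟨hx.1, hx.2.le⟩
    have hy'' : y' ∈ Ioc (0:ℝ) π := ⟨hy'.1, hy'.2.le⟩
    simp only
    rw [(hid x hx').1, (hid y' hy'').1]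
    exact FB_div_anti hx' hy'' hxy
  · intro φ hφ
    have hφ' : φ ∈ Ioc (0:ℝ) π := ⟨hφ.1, hφ.2.le⟩
    have hπm : π ∈ Ioc (0:ℝ) π := ⟨hπ0, le_refl π⟩
    have h1 : FB π / π < FB φ / φ := FB_div_anti hφ' hπm hφ.2
    have h2 := FB_pi_gt
    have hβφ : (β φ).im = FB φ := (hid φ hφ').1
    have hβπ : (β π).im = FB π := (hid π hπm).1
    rw [hβφ, hβπ]
    constructor
    · rw [gt_iff_lt, div_lt_iff₀ hπ0]
      rw [div_lt_div_iff₀ hπ0 hφ.1] at h1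
      nlinarith [hφ.1, h1]
    · rw [gt_iff_lt, div_lt_div_iff₀ (by norm_num : (0:ℝ) < 2) hπ0]
      nlinarith [hφ.1, h2]
end

section
/- Let φ ∈ (0,π), λ = (2cos φ − 2)³, and g₁(t) = (t²−2t+1)³ − λt³. Then the zeros of the polynomial h₁(x) obtained by the substitution x = (t+1/t)/2 (i.e. the half-sums α = (ξ+1/ξ)/2 over zeros ξ of g₁) are exactly α₁ = cos φ, α₂ = 1+(cos φ−1)e^{2πi/3}, α₃ = 1+(cos φ−1)e^{−2πi/3}, and these three values are pairwise distinct. -/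
open Real Set

/-!
Since `t + 1/t - 2 = (t - 1)² / t`, the equation `(t² - 2t + 1)³ = λ t³` says that
`(t + 1/t)/2 - 1` cubes to `(cos φ - 1)³`, so `(t + 1/t)/2 = 1 + (cos φ - 1) u` for a cube root
of unity `u ∈ {1, ω, ω⁻¹}`. Conversely every value is attained, because `t ↦ (t + 1/t)/2` is
onto over an algebraically closed field. The three values are distinct since `cos φ ≠ 1` and
the cube roots of unity are distinct.
-/

namespace IsPrimitiveRoot

variable {K : Type*} [Field K] {ω : K}

theorem cube_eq_cube_iff (hω : IsPrimitiveRoot ω 3) {a b : K} :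
    a ^ 3 = b ^ 3 ↔ a = b ∨ a = ω * b ∨ a = ω⁻¹ * b := by
  have hω3 : ω ^ 3 = 1 := hω.pow_eq_one
  have hsum : ω ^ 2 + ω + 1 = 0 := by
    have h := hω.geom_sum_eq_zero (by norm_num)
    simp only [Finset.sum_range_succ, Finset.sum_range_zero] at h
    linear_combination h
  have hinv : ω⁻¹ = ω ^ 2 :=
    (eq_inv_of_mul_eq_one_left (by linear_combination hω3 : ω ^ 2 * ω = 1)).symm
  have hfactor : a ^ 3 - b ^ 3 = (a - b) * ((a - ω * b) * (a - ω⁻¹ * b)) := by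
    rw [hinv]
    linear_combination (a ^ 2 * b - ω * a * b ^ 2) * hsum + b ^ 3 * hω3
  rw [← sub_eq_zero, hfactor, mul_eq_zero, mul_eq_zero, sub_eq_zero, sub_eq_zero, sub_eq_zero]

theorem one_add_sub_one_mul_pairwise_ne (hω : IsPrimitiveRoot ω 3) {c : K} (hc : c ≠ 1) :
    c ≠ 1 + (c - 1) * ω ∧ c ≠ 1 + (c - 1) * ω⁻¹ ∧
      1 + (c - 1) * ω ≠ 1 + (c - 1) * ω⁻¹ := by
  have hinj : Function.Injective fun u : K ↦ 1 + (c - 1) * u := fun u v h ↦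
    mul_left_cancel₀ (sub_ne_zero.2 hc) (add_left_cancel h)
  have hsq : ω ^ 2 ≠ 1 := hω.pow_ne_one_of_pos_of_lt (by norm_num) (by norm_num)
  refine ⟨fun h ↦ ?_, fun h ↦ ?_, fun h ↦ ?_⟩
  · refine hω.ne_one (by norm_num) (hinj ?_).symm
    dsimp only
    rw [← h, mul_one, add_sub_cancel]
  · refine hω.inv.ne_one (by norm_num) (hinj ?_).symm
    dsimp only
    rw [← h, mul_one, add_sub_cancel]
  · refine hsq ?_
    rw [sq]
    nth_rw 2 [hinj h]
    exact mul_inv_cancel₀ (hω.ne_zero (by norm_num))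

end IsPrimitiveRoot

section HalfSum

variable {K : Type*} [Field K] [NeZero (2 : K)]

theorem half_add_inv_eq_iff {t : K} (ht : t ≠ 0) (c u : K) :
    (t + 1 / t) / 2 = 1 + (c - 1) * u ↔ t ^ 2 - 2 * t + 1 = u * ((2 * c - 2) * t) := by
  rw [div_eq_iff two_ne_zero]
  field_simp
  constructor <;> intro h <;> linear_combination h

theorem exists_half_add_inv_eq [IsAlgClosed K] (y : K) : ∃ t ≠ 0, (t + 1 / t) / 2 = y := by
  obtain ⟨s, hs⟩ := IsAlgClosed.exists_pow_nat_eq (y ^ 2 - 1) two_pos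
  -- `y + s` and `y - s` are the two roots of `t² - 2yt + 1`, so they are mutually inverse.
  have hprod : (y + s) * (y - s) = 1 := by linear_combination -hs
  have ht : y + s ≠ 0 := left_ne_zero_of_mul_eq_one hprod
  refine ⟨y + s, ht, ?_⟩
  rw [one_div, inv_eq_of_mul_eq_one_right hprod, div_eq_iff two_ne_zero]
  ring

theorem setOf_half_add_inv_of_cube_eq [IsAlgClosed K] {ω : K} (hω : IsPrimitiveRoot ω 3)
    (c : K) :
    {x : K | ∃ t : K, t ≠ 0 ∧ (t ^ 2 - 2 * t + 1) ^ 3 - (2 * c - 2) ^ 3 * t ^ 3 = 0 ∧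
        x = (t + 1 / t) / 2} =
      {c, 1 + (c - 1) * ω, 1 + (c - 1) * ω⁻¹} := by
  have hroot : ∀ t : K, t ≠ 0 →
      ((t ^ 2 - 2 * t + 1) ^ 3 - (2 * c - 2) ^ 3 * t ^ 3 = 0 ↔
        (t + 1 / t) / 2 ∈ ({c, 1 + (c - 1) * ω, 1 + (c - 1) * ω⁻¹} : Set K)) := by
    intro t ht
    have hc : c = 1 + (c - 1) * 1 := by ring
    rw [sub_eq_zero, ← mul_pow, hω.cube_eq_cube_iff, mem_insert_iff, mem_insert_iff,
      mem_singleton_iff, hc, half_add_inv_eq_iff ht, half_add_inv_eq_iff ht,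
      half_add_inv_eq_iff ht, one_mul, ← hc]
  ext x
  constructor
  · rintro ⟨t, ht, h, rfl⟩
    exact (hroot t ht).1 h
  · intro hx
    obtain ⟨t, ht, rfl⟩ := exists_half_add_inv_eq x
    exact ⟨t, ht, (hroot t ht).2 hx, rfl⟩

end HalfSum

theorem roots_of_h1 (φ : ℝ) (hφ : φ ∈ Ioo (0 : ℝ) π) :
    {x : ℂ | ∃ t : ℂ, t ≠ 0 ∧
        (t ^ 2 - 2 * t + 1) ^ 3 - ((2 * Real.cos φ - 2 : ℝ) : ℂ) ^ 3 * t ^ 3 = 0 ∧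
        x = (t + 1 / t) / 2} =
      {(Real.cos φ : ℂ),
        1 + ((Real.cos φ : ℂ) - 1) * Complex.exp (2 * Real.pi * Complex.I / 3),
        1 + ((Real.cos φ : ℂ) - 1) * Complex.exp (-(2 * Real.pi * Complex.I) / 3)} ∧
    ((Real.cos φ : ℂ) ≠
        1 + ((Real.cos φ : ℂ) - 1) * Complex.exp (2 * Real.pi * Complex.I / 3)) ∧
    ((Real.cos φ : ℂ) ≠
        1 + ((Real.cos φ : ℂ) - 1) * Complex.exp (-(2 * Real.pi * Complex.I) / 3)) ∧
    (1 + ((Real.cos φ : ℂ) - 1) * Complex.exp (2 * Real.pi * Complex.I / 3) ≠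
        1 + ((Real.cos φ : ℂ) - 1) * Complex.exp (-(2 * Real.pi * Complex.I) / 3)) := by
  have hω : IsPrimitiveRoot (Complex.exp (2 * Real.pi * Complex.I / 3)) 3 := by
    exact_mod_cast Complex.isPrimitiveRoot_exp 3 (by norm_num)
  have hinv : Complex.exp (-(2 * Real.pi * Complex.I) / 3) =
      (Complex.exp (2 * Real.pi * Complex.I / 3))⁻¹ := by
    rw [neg_div, Complex.exp_neg]
  obtain ⟨hφ0, hφπ⟩ := hφ
  have hcos : Real.cos φ ≠ 1 := fun h ↦ hφ0.ne' <|
    (Real.cos_eq_one_iff_of_lt_of_lt (by linarith [pi_pos]) (by linarith [pi_pos])).1 h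
  have hc : (Real.cos φ : ℂ) ≠ 1 := by exact_mod_cast hcos
  have hcast : ((2 * Real.cos φ - 2 : ℝ) : ℂ) = 2 * (Real.cos φ : ℂ) - 2 := by norm_cast
  rw [hinv, hcast]
  exact ⟨setOf_half_add_inv_of_cube_eq hω _, hω.one_add_sub_one_mul_pairwise_ne hc⟩
end
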